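/- arXiv:math/9803155 — 5 statements merged into one kernel-verified Lean document; each statement's English description precedes it below -/
import Mathlib

section
/- Let n ≥ 2 and define the operator S⁺ on ℂ[x_1,…,x_n] by S⁺ = Σ_{k=2}^{n−1} [ (x_1∂_k)∘(x_k∂_n) + (x_k∂_n)∘(x_1∂_k) ] + Σ_{k=1}^{n−1} ((n−2k)/n)·[ H_k∘(x_1∂_n) + (x_1∂_n)∘H_k ]. Then for every μ ∈ ℕ and every homogeneous polynomial P of degree μ one has S⁺(P) = ((n−2)(2μ+n)/n)·(x_1∂_n)(P). (This is the value c_1(μω_1, ℏ) = ((n−2)/n)(2μ+nℏ) at ℏ = 1: the image of the symmetric highest weight vector s⁺_{ω_1+ω_{n−1}} is c_1 times the operator representing g_{1,n}.) -/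
noncomputable section

open MvPolynomial

/-- The first order differential operator `x_i ∂_j` on `ℂ[x_1, …, x_n]`,
with 1-based indices `1 ≤ i, j ≤ n` (and junk value `0` out of range). -/
def xD (n : ℕ) (i j : ℕ) : Module.End ℂ (MvPolynomial (Fin n) ℂ) :=
  if h : i - 1 < n ∧ j - 1 < n then
    (LinearMap.mulLeft ℂ (X (⟨i - 1, h.1⟩ : Fin n))).comp
      (pderiv (⟨j - 1, h.2⟩ : Fin n)).toLinearMap
  else 0

/-- The Cartan operator `H_i = x_i ∂_i − x_{i+1} ∂_{i+1}`, `1 ≤ i ≤ n−1`. -/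
def Hcl (n : ℕ) (i : ℕ) : Module.End ℂ (MvPolynomial (Fin n) ℂ) :=
  xD n i i - xD n (i + 1) (i + 1)

/-- The operator `S⁺`, the image of the symmetric highest weight vector
`s⁺_{ω_1+ω_{n−1}}` under the `sl(n)`-representation on polynomials. -/
def Splus (n : ℕ) : Module.End ℂ (MvPolynomial (Fin n) ℂ) :=
  (∑ k ∈ Finset.Icc 2 (n - 1), (xD n 1 k * xD n k n + xD n k n * xD n 1 k)) +
  (∑ k ∈ Finset.Icc 1 (n - 1),
      (((n : ℂ) - 2 * (k : ℂ)) / (n : ℂ)) • (Hcl n k * xD n 1 n + xD n 1 n * Hcl n k))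

lemma my_pderiv_comm {σ : Type*} [DecidableEq σ] {R : Type*} [CommSemiring R]
    (i j : σ) (p : MvPolynomial σ R) :
    pderiv i (pderiv j p) = pderiv j (pderiv i p) := by
  induction p using MvPolynomial.induction_on with
  | C a => simp
  | add p q hp hq => simp [hp, hq]
  | mul_X p k h =>
      simp only [pderiv_mul, map_add, pderiv_mul, h, pderiv_X]
      rcases eq_or_ne k i with rfl | hik <;> rcases eq_or_ne k j with rfl | hjk <;>
        simp [Pi.single_eq_of_ne, *]

lemma my_X_mul_pderiv_monomial {σ : Type*} [DecidableEq σ] (i : σ) (d : σ →₀ ℕ) (c : ℂ) :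
    X i * pderiv i (monomial d c) = monomial d (c * (d i : ℂ)) := by
  rw [pderiv_monomial]
  rcases Nat.eq_zero_or_pos (d i) with h | h
  · simp [h]
  · have h1 : Finsupp.single i 1 ≤ d := by
      rw [Finsupp.single_le_iff]; exact h
    rw [X, monomial_mul, one_mul, add_tsub_cancel_of_le h1]

lemma my_euler {n : ℕ} (μ : ℕ) (P : MvPolynomial (Fin n) ℂ) (hP : P.IsHomogeneous μ) :
    ∑ i : Fin n, X i * pderiv i P = (μ : ℂ) • P := by
  classical
  rw [P.as_sum]
  simp only [map_sum, Finset.mul_sum, Finset.smul_sum]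
  rw [Finset.sum_comm]
  refine Finset.sum_congr rfl fun d hd => ?_
  have hdeg : d.degree = μ := by
    have := hP (mem_support_iff.mp hd)
    rw [Finsupp.degree_eq_weight_one]; exact this
  have hsum : ∑ i : Fin n, (d i : ℂ) = (μ : ℂ) := by
    rw [← hdeg, Finsupp.degree_apply]
    push_cast
    exact (Finset.sum_subset (Finset.subset_univ _)
      (fun x _ hx => by simp [Finsupp.notMem_support_iff.mp hx])).symm
  calc ∑ i : Fin n, X i * pderiv i (monomial d (coeff d P))
      = ∑ i : Fin n, monomial d (coeff d P * (d i : ℂ)) :=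
        Finset.sum_congr rfl fun i _ => my_X_mul_pderiv_monomial i d _
    _ = monomial d (coeff d P * ∑ i : Fin n, (d i : ℂ)) := by
        rw [Finset.mul_sum, map_sum]
    _ = (μ : ℂ) • monomial d (coeff d P) := by
        rw [hsum, smul_monomial, smul_eq_mul, mul_comm]


lemma xD_apply (n i j : ℕ) (hi : i - 1 < n) (hj : j - 1 < n) (Q : MvPolynomial (Fin n) ℂ) :
    xD n i j Q = X (⟨i - 1, hi⟩ : Fin n) * pderiv (⟨j - 1, hj⟩ : Fin n) Q := by
  rw [xD, dif_pos ⟨hi, hj⟩]; rfl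

/-- On a homogeneous polynomial of degree `μ`, the operator `S⁺` acts as
`((n−2)(2μ+n)/n)·(x_1∂_n)`, i.e. the image of `s⁺_{ω_1+ω_{n−1}}` is `c_1(μω_1, ℏ)`
at `ℏ = 1` times the operator representing `g_{1,n}`. -/
theorem stmt_2 (n : ℕ) (hn : 2 ≤ n) (μ : ℕ) (P : MvPolynomial (Fin n) ℂ)
    (hP : P ∈ homogeneousSubmodule (Fin n) ℂ μ) :
    Splus n P = ((((n : ℂ) - 2) * (2 * (μ : ℂ) + (n : ℂ))) / (n : ℂ)) • (xD n 1 n P) := by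
  classical
  rw [mem_homogeneousSubmodule] at hP
  have hnC : (n : ℂ) ≠ 0 := by
    exact_mod_cast (by omega : (n : ℕ) ≠ 0)
  have h0 : (0 : ℕ) < n := by omega
  have hbn : n - 1 < n := by omega
  set a : Fin n := ⟨0, h0⟩ with ha
  set b : Fin n := ⟨n - 1, hbn⟩ with hbdef
  have hab : a ≠ b := by
    simp only [ha, hbdef, Fin.mk.injEq, ne_eq]
    omega
  set Q : MvPolynomial (Fin n) ℂ := pderiv b P with hQ
  set E : MvPolynomial (Fin n) ℂ := X a * Q with hEdef
  set G : ℕ → MvPolynomial (Fin n) ℂ :=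
    fun j => if h : j < n then
      X a * (X (⟨j, h⟩ : Fin n) * pderiv (⟨j, h⟩ : Fin n) Q) else 0 with hGdef
  have hGval : ∀ (j : ℕ) (h : j < n),
      G j = X a * (X (⟨j, h⟩ : Fin n) * pderiv (⟨j, h⟩ : Fin n) Q) := fun j h => dif_pos h
  set c : ℕ → ℂ := fun k => ((n : ℂ) - 2 * k) / n with hcdef
  -- the operator x_1 ∂_n sends P to E
  have hxD1n : xD n 1 n P = E := by
    rw [xD_apply n 1 n (by omega) hbn]
  -- A-type identity
  have hA : ∀ (j : ℕ) (h : j < n),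
      X (⟨j, h⟩ : Fin n) * pderiv (⟨j, h⟩ : Fin n) (X a * Q)
        = G j + if j = 0 then E else 0 := by
    intro j h
    rw [pderiv_mul, hGval j h]
    by_cases hj : j = 0
    · subst hj
      have hja : (⟨0, h⟩ : Fin n) = a := rfl
      rw [hja, if_pos rfl, pderiv_X_self, hEdef]
      ring
    · have hja : a ≠ (⟨j, h⟩ : Fin n) := by
        simp only [ha, Fin.mk.injEq, ne_eq]; omega
      rw [pderiv_X_of_ne hja, if_neg hj]
      ring
  -- B-type identity
  have hB : ∀ (j : ℕ) (h : j < n),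
      X a * pderiv b (X (⟨j, h⟩ : Fin n) * pderiv (⟨j, h⟩ : Fin n) P)
        = G j + if j = n - 1 then E else 0 := by
    intro j h
    rw [pderiv_mul, hGval j h, my_pderiv_comm, ← hQ]
    by_cases hj : j = n - 1
    · subst hj
      have hjb : (⟨n - 1, h⟩ : Fin n) = b := rfl
      rw [hjb, if_pos rfl, pderiv_X_self, ← hQ, hEdef]
      ring
    · have hjb : (⟨j, h⟩ : Fin n) ≠ b := by
        simp only [hbdef, Fin.mk.injEq, ne_eq]; omega
      rw [pderiv_X_of_ne hjb, if_neg hj]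
      ring
  -- first-sum term identities
  have hT1a : ∀ (j : ℕ) (h : j < n),
      X a * pderiv (⟨j, h⟩ : Fin n) (X (⟨j, h⟩ : Fin n) * Q) = E + G j := by
    intro j h
    rw [pderiv_mul, pderiv_X_self, hGval j h, hEdef]
    ring
  have hT1b : ∀ (j : ℕ) (h : j < n),
      X (⟨j, h⟩ : Fin n) * pderiv b (X a * pderiv (⟨j, h⟩ : Fin n) P) = G j := by
    intro j h
    rw [pderiv_mul, pderiv_X_of_ne hab, my_pderiv_comm, ← hQ, hGval j h]
    ring
  -- Euler identity for Q
  have heuler : ∑ i : Fin n, X i * pderiv i P = (μ : ℂ) • P := my_euler μ P hP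
  have heulerQ : ∑ i : Fin n, X i * pderiv i Q = (μ : ℂ) • Q - Q := by
    have h := congrArg (pderiv b) heuler
    rw [map_sum, Derivation.map_smul] at h
    have h2 : ∀ i : Fin n,
        pderiv b (X i * pderiv i P)
          = X i * pderiv i Q + if i = b then Q else 0 := by
      intro i
      rw [pderiv_mul, my_pderiv_comm, ← hQ]
      by_cases hi : i = b
      · subst hi; rw [pderiv_X_self, if_pos rfl, hQ]; ring
      · rw [pderiv_X_of_ne hi, if_neg hi]; ring
    rw [Finset.sum_congr rfl fun i _ => h2 i, Finset.sum_add_distrib,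
      Finset.sum_ite_eq' Finset.univ b (fun _ => Q), if_pos (Finset.mem_univ b)] at h
    rw [← hQ] at h
    linear_combination h
  -- sum of G over range n
  set SG : MvPolynomial (Fin n) ℂ := ∑ j ∈ Finset.range n, G j with hSGdef
  have hSG : SG = ((μ : ℂ) - 1) • E := by
    have h1 : SG = ∑ i : Fin n, (X a * (X i * pderiv i Q)) := by
      rw [hSGdef, ← Fin.sum_univ_eq_sum_range G n]
      refine Finset.sum_congr rfl fun i _ => ?_
      rw [hGval i.val i.isLt]
    rw [h1, ← Finset.mul_sum, heulerQ, hEdef]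
    rw [mul_sub, mul_smul_comm, sub_smul, one_smul]
  -- expand Splus applied to P
  have hexp : Splus n P =
      (∑ k ∈ Finset.Icc 2 (n - 1), (xD n 1 k (xD n k n P) + xD n k n (xD n 1 k P))) +
      (∑ k ∈ Finset.Icc 1 (n - 1), c k •
        ((xD n k k (xD n 1 n P) - xD n (k+1) (k+1) (xD n 1 n P))
          + (xD n 1 n (xD n k k P) - xD n 1 n (xD n (k+1) (k+1) P)))) := by
    simp only [Splus, Hcl, LinearMap.add_apply, LinearMap.coe_sum, Finset.sum_apply,
      Module.End.mul_apply, LinearMap.smul_apply, LinearMap.sub_apply, map_sub, hcdef]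
  -- first sum, termwise
  have hS1 : ∀ k ∈ Finset.Icc 2 (n - 1),
      xD n 1 k (xD n k n P) + xD n k n (xD n 1 k P) = (E + G (k-1)) + G (k-1) := by
    intro k hk
    rw [Finset.mem_Icc] at hk
    have hk1 : k - 1 < n := by omega
    rw [xD_apply n k n hk1 hbn, xD_apply n 1 k (by omega) hk1,
        xD_apply n 1 k (by omega) hk1, xD_apply n k n hk1 hbn]
    have h1n : (⟨1 - 1, by omega⟩ : Fin n) = a := rfl
    have hnn : (⟨n - 1, hbn⟩ : Fin n) = b := rfl
    rw [h1n, hnn, ← hQ, hT1a (k-1) hk1, hT1b (k-1) hk1]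
  -- second sum, termwise
  have hS2 : ∀ k ∈ Finset.Icc 1 (n - 1),
      (xD n k k (xD n 1 n P) - xD n (k+1) (k+1) (xD n 1 n P))
        + (xD n 1 n (xD n k k P) - xD n 1 n (xD n (k+1) (k+1) P))
      = ((G (k-1) + (if k = 1 then E else 0)) - G k)
        + (G (k-1) - (G k + (if k = n - 1 then E else 0))) := by
    intro k hk
    rw [Finset.mem_Icc] at hk
    have hk1 : k - 1 < n := by omega
    have hk2 : k < n := by omega
    rw [hxD1n, hEdef]
    rw [xD_apply n k k hk1 hk1, xD_apply n (k+1) (k+1) (by omega) (by omega),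
        xD_apply n 1 n (by omega) hbn, xD_apply n k k hk1 hk1,
        xD_apply n 1 n (by omega) hbn, xD_apply n (k+1) (k+1) (by omega) (by omega)]
    have h1n : (⟨1 - 1, by omega⟩ : Fin n) = a := rfl
    have hnn : (⟨n - 1, hbn⟩ : Fin n) = b := rfl
    have hkk' : (⟨k + 1 - 1, by omega⟩ : Fin n) = (⟨k, hk2⟩ : Fin n) := by
      apply Fin.ext
      simp only []
      omega
    rw [h1n, hnn, hkk']
    rw [hA (k-1) hk1, hA k hk2, hB (k-1) hk1, hB k hk2]
    rw [if_neg (by omega : ¬ k = 0), if_neg (by omega : ¬ (k - 1 = n - 1)),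
      add_zero, add_zero]
    congr 2
    by_cases h : k = 1
    · simp [h, hEdef]
    · rw [if_neg (by omega : ¬ (k - 1 = 0)), if_neg h]
  have step1 : Splus n P =
      (∑ k ∈ Finset.Icc 2 (n - 1), ((E + G (k-1)) + G (k-1))) +
      ∑ k ∈ Finset.Icc 1 (n - 1), c k •
        (((G (k-1) + (if k = 1 then E else 0)) - G k)
          + (G (k-1) - (G k + (if k = n - 1 then E else 0)))) := by
    rw [hexp]
    congr 1
    · exact Finset.sum_congr rfl hS1
    · exact Finset.sum_congr rfl fun k hk => by rw [hS2 k hk]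
  -- scalar facts
  have hcstep : ∀ i : ℕ, c (i + 1) - c i = -(2 / (n : ℂ)) := by
    intro i
    simp only [hcdef]
    push_cast
    field_simp
    ring
  have hc0 : c 0 = 1 := by
    simp only [hcdef]
    push_cast
    field_simp
    ring
  have hc1 : c 1 = 1 - 2 / (n : ℂ) := by
    simp only [hcdef]
    push_cast
    field_simp
  have hcn1 : c (n - 1) = 2 / (n : ℂ) - 1 := by
    simp only [hcdef]
    have : ((n - 1 : ℕ) : ℂ) = (n : ℂ) - 1 := by
      push_cast [Nat.cast_sub (by omega : 1 ≤ n)]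
      ring
    rw [this]
    field_simp
    ring
  -- Icc to Ico
  have hIcc1 : Finset.Icc 2 (n - 1) = Finset.Ico 2 n := by
    rw [← Finset.Ico_add_one_right_eq_Icc]
    congr 1
    omega
  have hIcc2 : Finset.Icc 1 (n - 1) = Finset.Ico 1 n := by
    rw [← Finset.Ico_add_one_right_eq_Icc]
    congr 1
    omega
  -- shift identities
  have hshift1 : ∑ i ∈ Finset.range (n - 1), G (i + 1) = SG - G 0 := by
    have h := Finset.sum_range_succ' G (n - 1)
    rw [show n - 1 + 1 = n from by omega] at h
    rw [← hSGdef] at h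
    linear_combination -h
  have hshift2 : ∑ i ∈ Finset.range (n - 2), G (i + 1) = SG - G 0 - G (n - 1) := by
    have h2 := Finset.sum_range_succ (fun i => G (i + 1)) (n - 2)
    rw [show n - 2 + 1 = n - 1 from by omega] at h2
    linear_combination hshift1 - h2
  have hGrange : ∑ i ∈ Finset.range (n - 1), G i = SG - G (n - 1) := by
    have h := Finset.sum_range_succ G (n - 1)
    rw [show n - 1 + 1 = n from by omega] at h
    rw [← hSGdef] at h
    linear_combination -h
  -- first sum
  have hsum1 : (∑ k ∈ Finset.Icc 2 (n - 1), ((E + G (k - 1)) + G (k - 1)))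
      = (n - 2 : ℕ) • E + ((SG - G 0 - G (n - 1)) + (SG - G 0 - G (n - 1))) := by
    rw [hIcc1, Finset.sum_Ico_eq_sum_range]
    have hterm : ∀ i, ((E + G (2 + i - 1)) + G (2 + i - 1)) = E + (G (i + 1) + G (i + 1)) := by
      intro i
      rw [show 2 + i - 1 = i + 1 from by omega]
      ring
    rw [Finset.sum_congr rfl fun i _ => hterm i, Finset.sum_add_distrib,
      Finset.sum_const, Finset.card_range, Finset.sum_add_distrib, hshift2]
  -- second sum
  have hif1 : ∀ i ∈ Finset.range (n - 1),
      c (i + 1) • (if i + 1 = 1 then E else 0) = (if i = 0 then c 1 • E else 0) := by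
    intro i _
    by_cases h : i = 0
    · subst h
      rw [if_pos rfl, if_pos rfl]
    · rw [if_neg (by omega), if_neg h, smul_zero]
  have hif2 : ∀ i ∈ Finset.range (n - 1),
      c (i + 1) • (if i + 1 = n - 1 then E else 0)
        = (if i = n - 2 then c (n - 1) • E else 0) := by
    intro i hi
    rw [Finset.mem_range] at hi
    by_cases h : i = n - 2
    · subst h
      rw [if_pos (by omega : n - 2 + 1 = n - 1), if_pos rfl,
        show n - 2 + 1 = n - 1 from by omega]
    · rw [if_neg (by omega), if_neg h, smul_zero]
  have hsum2 : (∑ k ∈ Finset.Icc 1 (n - 1), c k •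
        (((G (k - 1) + (if k = 1 then E else 0)) - G k)
          + (G (k - 1) - (G k + (if k = n - 1 then E else 0)))))
      = ∑ i ∈ Finset.range (n - 1),
          (((-(2 / (n : ℂ))) • G i + (-(2 / (n : ℂ))) • G i)
            + (((c i • G i - c (i + 1) • G (i + 1)) + (c i • G i - c (i + 1) • G (i + 1)))
            + ((if i = 0 then c 1 • E else 0) - (if i = n - 2 then c (n - 1) • E else 0)))) := by
    rw [hIcc2, Finset.sum_Ico_eq_sum_range]
    refine Finset.sum_congr rfl fun i hi => ?_
    rw [show 1 + i - 1 = i from by omega, show 1 + i = i + 1 from by omega,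
      ← hcstep i, ← hif1 i hi, ← hif2 i hi]
    module
  have htel : ∑ i ∈ Finset.range (n - 1), c (i + 1) • G (i + 1)
      = ∑ i ∈ Finset.range (n - 1), c i • G i + c (n - 1) • G (n - 1) - c 0 • G 0 := by
    have h := Finset.sum_range_succ' (fun i => c i • G i) (n - 1)
    have h2 := Finset.sum_range_succ (fun i => c i • G i) (n - 1)
    rw [show n - 1 + 1 = n from by omega] at h h2
    linear_combination h2 - h
  rw [step1, hsum1, hsum2]
  simp only [Finset.sum_add_distrib, Finset.sum_sub_distrib]
  rw [htel, Finset.sum_ite_eq' (Finset.range (n - 1)) 0 (fun _ => c 1 • E),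
    Finset.sum_ite_eq' (Finset.range (n - 1)) (n - 2) (fun _ => c (n - 1) • E),
    if_pos (Finset.mem_range.mpr (by omega : 0 < n - 1)),
    if_pos (Finset.mem_range.mpr (by omega : n - 2 < n - 1)),
    ← Finset.smul_sum, hGrange, hSG, hc0, hcn1, hc1, hxD1n,
    ← Nat.cast_smul_eq_nsmul ℂ, show ((n - 2 : ℕ) : ℂ) = (n : ℂ) - 2 from by
      push_cast [Nat.cast_sub (by omega : 2 ≤ n)]; ring]
  have hfinal : ((((n : ℂ) - 2) * (2 * (μ : ℂ) + (n : ℂ))) / (n : ℂ))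
      = ((n : ℂ) - 2) + ((2 : ℂ) - 4 / n) * ((μ : ℂ) - 1) + ((2 : ℂ) - 4 / n) := by
    field_simp
    ring
  rw [hfinal]
  module
end
end

section
/- The operators E_i, F_i, K_i (1 ≤ i ≤ n−1) on V satisfy the defining relations of U_q(sl(n)): (a) K_iK_j = K_jK_i for all i,j, and each K_i is invertible; (b) K_iE_jK_i^{−1} = q^{c_{ij}}E_j and K_iF_jK_i^{−1} = q^{−c_{ij}}F_j, where c_{ii} = 2, c_{ij} = −1 if |i−j| = 1, and c_{ij} = 0 otherwise; (c) E_iF_j − F_jE_i = δ_{ij}(K_i − K_i^{−1})/(q − q^{−1}); (d) E_iE_j = E_jE_i and F_iF_j = F_jF_i whenever |i−j| ≥ 2; (e) E_i²E_j − [2]_q E_iE_jE_i + E_jE_i² = 0 and F_i²F_j − [2]_q F_iF_jF_i + F_jF_i² = 0 whenever |i−j| = 1. Hence V carries a structure of U_q(sl(n))-module (the q-deformation V^q_{μω_1} of the μ-th symmetric power of the vector representation). -/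
noncomputable section

/-- Index set for the basis `{|m_1, …, m_n⟩ : m_i ∈ ℕ, m_1 + ⋯ + m_n = μ}`. -/
abbrev VIdx (n μ : ℕ) := {m : Fin n → ℕ // ∑ i, m i = μ}

/-- The module `V = V^q_{μω_1}`: the free `K`-module with basis `VIdx n μ`. -/
abbrev VMod (n μ : ℕ) (K : Type*) [Field K] := VIdx n μ →₀ K

/-- The symmetric `q`-number `[a]_q = (q^a − q^{−a})/(q − q^{−1})`, `a ∈ ℤ`. -/
def qint {K : Type*} [Field K] (q : K) (a : ℤ) : K := (q ^ a - q ^ (-a)) / (q - q⁻¹)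

/-- `mval m i` is the coordinate `m_i` (1-based index `1 ≤ i ≤ n`). -/
def mval {n : ℕ} (m : Fin n → ℕ) (i : ℕ) : ℕ :=
  if h : i - 1 < n then m ⟨i - 1, h⟩ else 0

/-- Update the (1-based) `i`-th coordinate of `m` to `v`. -/
def mupd {n : ℕ} (m : Fin n → ℕ) (i v : ℕ) : Fin n → ℕ :=
  if h : i - 1 < n then Function.update m ⟨i - 1, h⟩ v else m

/-- Increase `m_i` by one. -/
def minc {n : ℕ} (m : Fin n → ℕ) (i : ℕ) : Fin n → ℕ := mupd m i (mval m i + 1)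

/-- Decrease `m_i` by one. -/
def mdec {n : ℕ} (m : Fin n → ℕ) (i : ℕ) : Fin n → ℕ := mupd m i (mval m i - 1)

/-- The basis vector `|m_1, …, m_n⟩` of `V` when `Σ m_i = μ`, and `0` otherwise. -/
def sngl (n μ : ℕ) (K : Type*) [Field K] (m : Fin n → ℕ) : VMod n μ K :=
  if h : ∑ i, m i = μ then Finsupp.single ⟨m, h⟩ 1 else 0

/-- The linear operator on `V` extending a map defined on basis vectors. -/
def vlift {n μ : ℕ} {K : Type*} [Field K] (f : VIdx n μ → VMod n μ K) :
    Module.End K (VMod n μ K) :=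
  Finsupp.lift (VMod n μ K) K (VIdx n μ) f

/-- `E_i|m⟩ = [m_{i+1}]_q |m_1, …, m_i+1, m_{i+1}−1, …, m_n⟩`
(the term vanishes when `m_{i+1} = 0` since `[0]_q = 0`). -/
def Eop (n μ : ℕ) (K : Type*) [Field K] (q : K) (i : ℕ) : Module.End K (VMod n μ K) :=
  vlift fun m => qint q (mval m.1 (i + 1) : ℤ) • sngl n μ K (minc (mdec m.1 (i + 1)) i)

/-- `F_i|m⟩ = [m_i]_q |m_1, …, m_i−1, m_{i+1}+1, …, m_n⟩`
(the term vanishes when `m_i = 0` since `[0]_q = 0`). -/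
def Fop (n μ : ℕ) (K : Type*) [Field K] (q : K) (i : ℕ) : Module.End K (VMod n μ K) :=
  vlift fun m => qint q (mval m.1 i : ℤ) • sngl n μ K (minc (mdec m.1 i) (i + 1))

/-- `K_i|m⟩ = q^{m_i − m_{i+1}} |m⟩`. -/
def Kop (n μ : ℕ) (K : Type*) [Field K] (q : K) (i : ℕ) : Module.End K (VMod n μ K) :=
  vlift fun m => (q ^ ((mval m.1 i : ℤ) - (mval m.1 (i + 1) : ℤ))) • sngl n μ K m.1

/-- `K_i^{−1}|m⟩ = q^{m_{i+1} − m_i} |m⟩`. -/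
def Kinvop (n μ : ℕ) (K : Type*) [Field K] (q : K) (i : ℕ) : Module.End K (VMod n μ K) :=
  vlift fun m => (q ^ ((mval m.1 (i + 1) : ℤ) - (mval m.1 i : ℤ))) • sngl n μ K m.1

/-- `H_i|m⟩ = (m_i − m_{i+1}) |m⟩`. -/
def Hop (n μ : ℕ) (K : Type*) [Field K] (i : ℕ) : Module.End K (VMod n μ K) :=
  vlift fun m => ((mval m.1 i : K) - (mval m.1 (i + 1) : K)) • sngl n μ K m.1

/-- The Cartan matrix of `sl(n)`: `c_{ii} = 2`, `c_{ij} = −1` if `|i−j| = 1`,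
`c_{ij} = 0` otherwise. -/
def cart (i j : ℕ) : ℤ := if i = j then 2 else if i + 1 = j ∨ j + 1 = i then -1 else 0

section Helpers

variable {n μ : ℕ} {K : Type*} [Field K] {q : K}

lemma qint_zero : qint q 0 = 0 := by simp [qint]

lemma qsub_ne (hq0 : q ≠ 0) (hq1 : q ^ 2 ≠ 1) : q - q⁻¹ ≠ 0 := by
  intro h
  apply hq1
  have h2 : q * q - 1 = 0 := by field_simp at h; linear_combination h
  linear_combination h2

lemma qint_one (hq0 : q ≠ 0) (hq1 : q ^ 2 ≠ 1) : qint q 1 = 1 := by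
  simp only [qint, zpow_one, zpow_neg]
  exact div_self (qsub_ne hq0 hq1)

lemma qint_comm_identity (hq0 : q ≠ 0) (hq1 : q ^ 2 ≠ 1) (a b : ℤ) :
    qint q a * qint q (b + 1) - qint q b * qint q (a + 1)
      = (q ^ (a - b) - q ^ (b - a)) / (q - q⁻¹) := by
  have hd := qsub_ne hq0 hq1
  have ha : q ^ a ≠ 0 := zpow_ne_zero _ hq0
  have hb : q ^ b ≠ 0 := zpow_ne_zero _ hq0
  rw [qint, qint, qint, qint, div_mul_div_comm, div_mul_div_comm, div_sub_div_same,
    ← mul_div_mul_right (q ^ (a - b) - q ^ (b - a)) (q - q⁻¹) hd]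
  congr 1
  simp only [zpow_add₀ hq0, zpow_sub₀ hq0, zpow_neg, zpow_one]
  field_simp
  ring

lemma qint_serre (hq0 : q ≠ 0) (hq1 : q ^ 2 ≠ 1) (a : ℤ) :
    qint q (a + 1) + qint q (a - 1) = (q + q⁻¹) * qint q a := by
  have ha : q ^ a ≠ 0 := zpow_ne_zero _ hq0
  rw [qint, qint, qint, ← add_div, ← mul_div_assoc]
  congr 1
  simp only [zpow_add₀ hq0, zpow_sub₀ hq0, zpow_neg, zpow_one]
  field_simp
  ring

end Helpers
section Helpers2

variable {n μ : ℕ} {K : Type*} [Field K] {q : K}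

lemma mval_mupd_self {m : Fin n → ℕ} {i v : ℕ} (hi : 1 ≤ i) (hin : i ≤ n) :
    mval (mupd m i v) i = v := by
  have h : i - 1 < n := by omega
  simp [mval, mupd, h]

lemma mval_mupd_ne {m : Fin n → ℕ} {i j v : ℕ} (hi : 1 ≤ i) (hj : 1 ≤ j) (hij : i ≠ j) :
    mval (mupd m i v) j = mval m j := by
  unfold mval mupd
  by_cases h1 : i - 1 < n <;> by_cases h2 : j - 1 < n <;> simp [h1, h2]
  rw [Function.update_of_ne]
  simp only [ne_eq, Fin.mk.injEq]
  omega

lemma mupd_comm {m : Fin n → ℕ} {i j v w : ℕ} (hi : 1 ≤ i) (hj : 1 ≤ j) (hij : i ≠ j) :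
    mupd (mupd m i v) j w = mupd (mupd m j w) i v := by
  unfold mupd
  by_cases h1 : i - 1 < n <;> by_cases h2 : j - 1 < n <;> simp [h1, h2]
  apply Function.update_comm
  simp only [ne_eq, Fin.mk.injEq]
  omega

lemma mupd_mupd_self {m : Fin n → ℕ} {i v w : ℕ} :
    mupd (mupd m i v) i w = mupd m i w := by
  unfold mupd
  by_cases h1 : i - 1 < n <;> simp [h1]

lemma sum_mupd {m : Fin n → ℕ} {i v : ℕ} (hi : 1 ≤ i) (hin : i ≤ n) :
    (∑ j, mupd m i v j) + mval m i = (∑ j, m j) + v := by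
  have h : i - 1 < n := by omega
  simp only [mupd, mval, h, dif_pos]
  rw [Finset.sum_update_of_mem (Finset.mem_univ _),
    ← Finset.add_sum_erase _ m (Finset.mem_univ (⟨i - 1, h⟩ : Fin n)), Finset.erase_eq]
  ring

lemma mval_zero_of_gt {m : Fin n → ℕ} {i : ℕ} (h : n < i) : mval m i = 0 := by
  have : ¬ (i - 1 < n) := by omega
  simp [mval, this]

lemma sngl_of_ne {m : Fin n → ℕ} (h : ¬ (∑ i, m i = μ)) : sngl n μ K m = 0 := by
  simp [sngl, h]

lemma sngl_of_eq {m : Fin n → ℕ} (h : ∑ i, m i = μ) :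
    sngl n μ K m = Finsupp.single ⟨m, h⟩ 1 := by simp [sngl, h]

lemma vlift_single (f : VIdx n μ → VMod n μ K) (m : VIdx n μ) :
    vlift f (Finsupp.single m 1) = f m := by
  simp [vlift]

lemma end_ext {A B : Module.End K (VMod n μ K)}
    (h : ∀ (m : Fin n → ℕ), (∑ i, m i = μ) → A (sngl n μ K m) = B (sngl n μ K m)) :
    A = B := by
  refine Finsupp.lhom_ext fun m c => ?_
  have h1 : (Finsupp.single m c : VMod n μ K) = c • Finsupp.single m 1 := by
    rw [Finsupp.smul_single, smul_eq_mul, mul_one]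
  rw [h1, map_smul, map_smul, ← sngl_of_eq m.2]
  · exact congrArg _ (by simpa [← sngl_of_eq m.2] using h m.1 m.2)

end Helpers2
/-- Generic shift operator: `S(a,b)|m⟩ = [m_a]_q |…, m_a−1, …, m_b+1, …⟩`.
`Eop i = Sop (i+1) i` and `Fop i = Sop i (i+1)`. -/
def Sop (n μ : ℕ) (K : Type*) [Field K] (q : K) (a b : ℕ) : Module.End K (VMod n μ K) :=
  vlift fun m => qint q (mval m.1 a : ℤ) • sngl n μ K (minc (mdec m.1 a) b)

section Helpers3

variable {n μ : ℕ} {K : Type*} [Field K] {q : K}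

lemma Eop_eq_Sop (i : ℕ) : Eop n μ K q i = Sop n μ K q (i + 1) i := rfl

lemma Fop_eq_Sop (i : ℕ) : Fop n μ K q i = Sop n μ K q i (i + 1) := rfl

lemma move_eq {m : Fin n → ℕ} {a b : ℕ} (ha : 1 ≤ a) (hb : 1 ≤ b) (hab : a ≠ b) :
    minc (mdec m a) b = mupd (mupd m a (mval m a - 1)) b (mval m b + 1) := by
  unfold minc mdec
  rw [mval_mupd_ne ha hb hab]

lemma sum_move {m : Fin n → ℕ} {a b : ℕ} (ha : 1 ≤ a) (hb : 1 ≤ b) (hbn : b ≤ n)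
    (hab : a ≠ b) (h : mval m a ≠ 0) :
    ∑ j, minc (mdec m a) b j = ∑ j, m j := by
  have han : a ≤ n := by
    by_contra hc
    exact h (mval_zero_of_gt (by omega))
  rw [move_eq ha hb hab]
  have h1 := sum_mupd (m := m) (i := a) (v := mval m a - 1) ha han
  have h2 := sum_mupd (m := mupd m a (mval m a - 1)) (i := b) (v := mval m b + 1) hb hbn
  rw [mval_mupd_ne ha hb hab] at h2
  omega

lemma mval_move {m : Fin n → ℕ} {a b : ℕ} (ha : 1 ≤ a) (han : a ≤ n) (hb : 1 ≤ b)
    (hbn : b ≤ n) (hab : a ≠ b) (k : ℕ) (hk : 1 ≤ k) :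
    mval (minc (mdec m a) b) k
      = if b = k then mval m k + 1 else if a = k then mval m k - 1 else mval m k := by
  rw [move_eq ha hb hab]
  by_cases hbk : b = k
  · subst hbk
    rw [if_pos rfl, mval_mupd_self hb hbn]
  · rw [if_neg hbk, mval_mupd_ne hb hk hbk]
    by_cases hak : a = k
    · subst hak
      rw [if_pos rfl, mval_mupd_self ha han]
    · rw [if_neg hak, mval_mupd_ne ha hk hak]

lemma eq_of_mval {m₁ m₂ : Fin n → ℕ} (h : ∀ k, 1 ≤ k → k ≤ n → mval m₁ k = mval m₂ k) :
    m₁ = m₂ := by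
  funext j
  have hj := h (j.val + 1) (by omega) j.isLt
  simpa [mval, j.isLt] using hj

lemma Sop_sngl {a b : ℕ} (ha : 1 ≤ a) (hb : 1 ≤ b) (hbn : b ≤ n) (hab : a ≠ b)
    (m : Fin n → ℕ) :
    Sop n μ K q a b (sngl n μ K m)
      = qint q (mval m a : ℤ) • sngl n μ K (minc (mdec m a) b) := by
  by_cases h : ∑ i, m i = μ
  · rw [sngl_of_eq h]
    exact vlift_single _ ⟨m, h⟩
  · rw [sngl_of_ne h, map_zero]
    by_cases h0 : mval m a = 0
    · rw [h0]
      simp [qint_zero]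
    · rw [sngl_of_ne (fun hc => h (by rw [← sum_move ha hb hbn hab h0]; exact hc)), smul_zero]

lemma Kop_sngl (i : ℕ) (m : Fin n → ℕ) :
    Kop n μ K q i (sngl n μ K m)
      = q ^ ((mval m i : ℤ) - (mval m (i + 1) : ℤ)) • sngl n μ K m := by
  by_cases h : ∑ i, m i = μ
  · conv_lhs => rw [sngl_of_eq h]
    unfold Kop
    rw [vlift_single]
  · rw [sngl_of_ne h, map_zero, smul_zero]

lemma Kinvop_sngl (i : ℕ) (m : Fin n → ℕ) :
    Kinvop n μ K q i (sngl n μ K m)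
      = q ^ ((mval m (i + 1) : ℤ) - (mval m i : ℤ)) • sngl n μ K m := by
  by_cases h : ∑ i, m i = μ
  · conv_lhs => rw [sngl_of_eq h]
    unfold Kinvop
    rw [vlift_single]
  · rw [sngl_of_ne h, map_zero, smul_zero]

end Helpers3
section Rels

variable {n μ : ℕ} {K : Type*} [Field K] {q : K}

lemma rel_KK (i j : ℕ) :
    Kop n μ K q i * Kop n μ K q j = Kop n μ K q j * Kop n μ K q i := by
  apply end_ext
  intro m hm
  simp only [Module.End.mul_apply, Kop_sngl, map_smul, smul_smul]
  rw [mul_comm]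

lemma rel_KKinv (hq0 : q ≠ 0) (i : ℕ) : Kop n μ K q i * Kinvop n μ K q i = 1 := by
  apply end_ext
  intro m hm
  simp only [Module.End.mul_apply, Kinvop_sngl, map_smul, Kop_sngl, smul_smul,
    Module.End.one_apply, ← zpow_add₀ hq0]
  norm_num

lemma rel_KinvK (hq0 : q ≠ 0) (i : ℕ) : Kinvop n μ K q i * Kop n μ K q i = 1 := by
  apply end_ext
  intro m hm
  simp only [Module.End.mul_apply, Kinvop_sngl, map_smul, Kop_sngl, smul_smul,
    Module.End.one_apply, ← zpow_add₀ hq0]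
  norm_num

lemma K_conj_S (hq0 : q ≠ 0) {i a b : ℕ} (hi : 1 ≤ i)
    (ha : 1 ≤ a) (han : a ≤ n) (hb : 1 ≤ b) (hbn : b ≤ n) (hab : a ≠ b) :
    Kop n μ K q i * Sop n μ K q a b * Kinvop n μ K q i
      = q ^ (((if b = i then 1 else 0) - (if a = i then 1 else 0)
            - ((if b = i + 1 then 1 else 0) - (if a = i + 1 then 1 else 0)) : ℤ))
        • Sop n μ K q a b := by
  apply end_ext
  intro m hm
  rw [Module.End.mul_apply, Module.End.mul_apply, Kinvop_sngl, map_smul,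
    Sop_sngl ha hb hbn hab, map_smul, map_smul, Kop_sngl, LinearMap.smul_apply,
    Sop_sngl ha hb hbn hab, smul_smul, smul_smul, smul_smul]
  congr 1
  by_cases h0 : mval m a = 0
  · rw [h0]
    norm_num [qint_zero]
  · have hva : (mval (minc (mdec m a) b) i : ℤ)
        = (mval m i : ℤ) + (if b = i then 1 else 0) - (if a = i then 1 else 0) := by
      rw [mval_move ha han hb hbn hab i hi]
      split_ifs <;> subst_vars <;> push_cast <;> omega
    have hvb : (mval (minc (mdec m a) b) (i + 1) : ℤ)
        = (mval m (i + 1) : ℤ) + (if b = i + 1 then 1 else 0)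
          - (if a = i + 1 then 1 else 0) := by
      rw [mval_move ha han hb hbn hab (i + 1) (by omega)]
      split_ifs <;> subst_vars <;> push_cast <;> omega
    rw [hva, hvb, mul_right_comm, ← zpow_add₀ hq0]
    congr 2
    ring

end Rels
section Rels2

variable {n μ : ℕ} {K : Type*} [Field K] {q : K}

lemma S_comm {a b c d : ℕ} (ha : 1 ≤ a) (han : a ≤ n) (hb : 1 ≤ b) (hbn : b ≤ n)
    (hc : 1 ≤ c) (hcn : c ≤ n) (hd : 1 ≤ d) (hdn : d ≤ n)
    (hab : a ≠ b) (hcd : c ≠ d) (had : a ≠ d) (hcb : c ≠ b) :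
    Sop n μ K q a b * Sop n μ K q c d = Sop n μ K q c d * Sop n μ K q a b := by
  apply end_ext
  intro m hm
  rw [Module.End.mul_apply, Module.End.mul_apply, Sop_sngl hc hd hdn hcd, map_smul,
    Sop_sngl ha hb hbn hab, smul_smul, Sop_sngl ha hb hbn hab, map_smul,
    Sop_sngl hc hd hdn hcd, smul_smul]
  have hv : minc (mdec (minc (mdec m c) d) a) b = minc (mdec (minc (mdec m a) b) c) d := by
    apply eq_of_mval
    intro k hk hkn
    simp only [mval_move ha han hb hbn hab k hk, mval_move hc hcn hd hdn hcd k hk]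
    split_ifs <;> subst_vars <;> omega
  have h1 : mval (minc (mdec m c) d) a = if c = a then mval m a - 1 else mval m a := by
    rw [mval_move hc hcn hd hdn hcd a ha]
    split_ifs <;> omega
  have h2 : mval (minc (mdec m a) b) c = if c = a then mval m c - 1 else mval m c := by
    rw [mval_move ha han hb hbn hab c hc]
    split_ifs <;> first | omega | (subst_vars; omega)
  rw [hv, h1, h2]
  congr 1
  by_cases hca : c = a
  · subst hca
    simp
  · rw [if_neg hca, if_neg hca, mul_comm]

lemma qint_two (hq0 : q ≠ 0) (hq1 : q ^ 2 ≠ 1) : qint q 2 = q + q⁻¹ := by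
  have h := qint_serre hq0 hq1 1
  norm_num [qint_zero, qint_one hq0 hq1] at h
  exact h

lemma rel_EF_diag (hq0 : q ≠ 0) (hq1 : q ^ 2 ≠ 1) {i : ℕ} (hi : 1 ≤ i) (hin : i + 1 ≤ n) :
    Sop n μ K q (i + 1) i * Sop n μ K q i (i + 1)
        - Sop n μ K q i (i + 1) * Sop n μ K q (i + 1) i
      = (q - q⁻¹)⁻¹ • (Kop n μ K q i - Kinvop n μ K q i) := by
  have hii : i ≠ i + 1 := by omega
  have hii' : i + 1 ≠ i := by omega
  apply end_ext
  intro m hm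
  have hEF : Sop n μ K q (i + 1) i (Sop n μ K q i (i + 1) (sngl n μ K m))
      = (qint q (mval m i : ℤ) * qint q ((mval m (i + 1) : ℤ) + 1)) • sngl n μ K m := by
    rw [Sop_sngl hi (by omega) hin hii, map_smul,
      Sop_sngl (by omega) hi (by omega) hii', smul_smul]
    have hmv : (mval (minc (mdec m i) (i + 1)) (i + 1) : ℤ) = (mval m (i + 1) : ℤ) + 1 := by
      rw [mval_move hi (by omega) (by omega) hin hii (i + 1) (by omega), if_pos rfl]
      push_cast
      ring
    rw [hmv]
    by_cases h0 : mval m i = 0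
    · rw [h0]
      norm_num [qint_zero]
    · congr 1
      congr 1
      apply eq_of_mval
      intro k hk hkn
      simp only [mval_move (by omega : 1 ≤ i + 1) hin hi (by omega : i ≤ n) hii' k hk,
        mval_move hi (by omega : i ≤ n) (by omega : 1 ≤ i + 1) hin hii k hk]
      split_ifs <;> subst_vars <;> omega
  have hFE : Sop n μ K q i (i + 1) (Sop n μ K q (i + 1) i (sngl n μ K m))
      = (qint q (mval m (i + 1) : ℤ) * qint q ((mval m i : ℤ) + 1)) • sngl n μ K m := by
    rw [Sop_sngl (by omega) hi (by omega) hii', map_smul,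
      Sop_sngl hi (by omega) hin hii, smul_smul]
    have hmv : (mval (minc (mdec m (i + 1)) i) i : ℤ) = (mval m i : ℤ) + 1 := by
      rw [mval_move (by omega) hin hi (by omega) hii' i hi, if_pos rfl]
      push_cast
      ring
    rw [hmv]
    by_cases h0 : mval m (i + 1) = 0
    · rw [h0]
      norm_num [qint_zero]
    · congr 1
      congr 1
      apply eq_of_mval
      intro k hk hkn
      simp only [mval_move (by omega : 1 ≤ i + 1) hin hi (by omega : i ≤ n) hii' k hk,
        mval_move hi (by omega : i ≤ n) (by omega : 1 ≤ i + 1) hin hii k hk]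
      split_ifs <;> subst_vars <;> omega
  rw [LinearMap.sub_apply, Module.End.mul_apply, Module.End.mul_apply, hEF, hFE, ← sub_smul,
    LinearMap.smul_apply, LinearMap.sub_apply, Kop_sngl, Kinvop_sngl, ← sub_smul, smul_smul,
    qint_comm_identity hq0 hq1]
  rw [div_eq_inv_mul]

end Rels2
section Serre

variable {n μ : ℕ} {K : Type*} [Field K] {q : K}

lemma SS_sngl {a b : ℕ} (ha : 1 ≤ a) (han : a ≤ n) (hb : 1 ≤ b) (hbn : b ≤ n)
    (hab : a ≠ b) (m : Fin n → ℕ) :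
    Sop n μ K q a b (Sop n μ K q a b (sngl n μ K m))
      = (qint q (mval m a : ℤ) * qint q ((mval m a : ℤ) - 1))
        • sngl n μ K (minc (mdec (minc (mdec m a) b) a) b) := by
  rw [Sop_sngl ha hb hbn hab, map_smul, Sop_sngl ha hb hbn hab, smul_smul]
  have e : mval (minc (mdec m a) b) a = mval m a - 1 := by
    rw [mval_move ha han hb hbn hab a ha]
    split_ifs <;> omega
  rw [e]
  by_cases h0 : mval m a = 0
  · rw [h0]
    simp [qint_zero]
  · congr 2
    push_cast [Nat.cast_sub (by omega : 1 ≤ mval m a)]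
    ring

lemma S_serre1 (hq0 : q ≠ 0) (hq1 : q ^ 2 ≠ 1) {a b c : ℕ}
    (ha : 1 ≤ a) (han : a ≤ n) (hb : 1 ≤ b) (hbn : b ≤ n) (hc : 1 ≤ c) (hcn : c ≤ n)
    (hab : a ≠ b) (hca : c ≠ a) (hcb : c ≠ b) :
    Sop n μ K q a b * Sop n μ K q a b * Sop n μ K q c a
        - (q + q⁻¹) • (Sop n μ K q a b * Sop n μ K q c a * Sop n μ K q a b)
        + Sop n μ K q c a * Sop n μ K q a b * Sop n μ K q a b = 0 := by
  apply end_ext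
  intro m hm
  simp only [LinearMap.add_apply, LinearMap.sub_apply, LinearMap.smul_apply,
    Module.End.mul_apply, LinearMap.zero_apply]
  have e1 : mval (minc (mdec m c) a) a = mval m a + 1 := by
    rw [mval_move hc hcn ha han hca a ha]
    split_ifs <;> subst_vars <;> omega
  have hT1 : Sop n μ K q a b (Sop n μ K q a b (Sop n μ K q c a (sngl n μ K m)))
      = (qint q (mval m c : ℤ) * (qint q ((mval m a + 1 : ℕ) : ℤ)
            * qint q (((mval m a + 1 : ℕ) : ℤ) - 1)))
        • sngl n μ K (minc (mdec (minc (mdec (minc (mdec m c) a) a) b) a) b) := by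
    rw [Sop_sngl hc ha han hca, map_smul, map_smul, SS_sngl ha han hb hbn hab, smul_smul, e1]
  have e2 : mval (minc (mdec m a) b) c = mval m c := by
    rw [mval_move ha han hb hbn hab c hc]
    split_ifs <;> subst_vars <;> omega
  have e3 : mval (minc (mdec (minc (mdec m a) b) c) a) a = mval (minc (mdec m a) b) a + 1 := by
    rw [mval_move hc hcn ha han hca a ha]
    split_ifs <;> subst_vars <;> omega
  have e4 : mval (minc (mdec m a) b) a = mval m a - 1 := by
    rw [mval_move ha han hb hbn hab a ha]
    split_ifs <;> omega
  have hT2 : Sop n μ K q a b (Sop n μ K q c a (Sop n μ K q a b (sngl n μ K m)))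
      = (qint q (mval m a : ℤ) * qint q (mval m c : ℤ)
          * qint q ((mval m a - 1 + 1 : ℕ) : ℤ))
        • sngl n μ K (minc (mdec (minc (mdec (minc (mdec m a) b) c) a) a) b) := by
    rw [Sop_sngl ha hb hbn hab, map_smul, Sop_sngl hc ha han hca, map_smul, map_smul,
      Sop_sngl ha hb hbn hab, smul_smul, smul_smul, e2, e3, e4]
  have e5 : mval (minc (mdec (minc (mdec m a) b) a) b) c = mval m c := by
    rw [mval_move ha han hb hbn hab c hc, mval_move ha han hb hbn hab c hc]
    split_ifs <;> subst_vars <;> omega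
  have hT3 : Sop n μ K q c a (Sop n μ K q a b (Sop n μ K q a b (sngl n μ K m)))
      = (qint q (mval m a : ℤ) * qint q ((mval m a : ℤ) - 1) * qint q (mval m c : ℤ))
        • sngl n μ K (minc (mdec (minc (mdec (minc (mdec m a) b) a) b) c) a) := by
    rw [SS_sngl ha han hb hbn hab, map_smul, Sop_sngl hc ha han hca, smul_smul, e5]
  rw [hT1, hT2, hT3]
  have hv12 : minc (mdec (minc (mdec (minc (mdec m c) a) a) b) a) b
      = minc (mdec (minc (mdec (minc (mdec m a) b) c) a) a) b := by
    apply eq_of_mval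
    intro k hk hkn
    simp only [mval_move ha han hb hbn hab k hk, mval_move hc hcn ha han hca k hk]
    split_ifs <;> subst_vars <;> omega
  rw [hv12]
  by_cases hg : mval m c = 0
  · rw [hg]
    simp [qint_zero]
  by_cases ha0 : mval m a = 0
  · rw [ha0]
    norm_num [qint_zero]
  by_cases ha1 : mval m a = 1
  · rw [ha1]
    norm_num [qint_zero, qint_one hq0 hq1, qint_two hq0 hq1]
    rw [smul_smul, ← sub_smul]
    convert zero_smul K _ using 2
    ring
  · have hv13 : minc (mdec (minc (mdec (minc (mdec m a) b) a) b) c) a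
        = minc (mdec (minc (mdec (minc (mdec m a) b) c) a) a) b := by
      apply eq_of_mval
      intro k hk hkn
      simp only [mval_move ha han hb hbn hab k hk, mval_move hc hcn ha han hca k hk]
      split_ifs <;> subst_vars <;> omega
    rw [hv13, smul_smul, ← sub_smul, ← add_smul,
      show ((mval m a - 1 + 1 : ℕ) : ℤ) = (mval m a : ℤ) from by omega,
      show ((mval m a + 1 : ℕ) : ℤ) = (mval m a : ℤ) + 1 from by push_cast; ring,
      add_sub_cancel_right]
    convert zero_smul K _ using 2
    have hs := qint_serre hq0 hq1 (mval m a : ℤ)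
    linear_combination (qint q (mval m c : ℤ) * qint q (mval m a : ℤ)) * hs

lemma S_serre2 (hq0 : q ≠ 0) (hq1 : q ^ 2 ≠ 1) {a b e : ℕ}
    (ha : 1 ≤ a) (han : a ≤ n) (hb : 1 ≤ b) (hbn : b ≤ n) (he : 1 ≤ e) (hen : e ≤ n)
    (hab : a ≠ b) (hbe : b ≠ e) (hae : a ≠ e) :
    Sop n μ K q a b * Sop n μ K q a b * Sop n μ K q b e
        - (q + q⁻¹) • (Sop n μ K q a b * Sop n μ K q b e * Sop n μ K q a b)
        + Sop n μ K q b e * Sop n μ K q a b * Sop n μ K q a b = 0 := by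
  apply end_ext
  intro m hm
  simp only [LinearMap.add_apply, LinearMap.sub_apply, LinearMap.smul_apply,
    Module.End.mul_apply, LinearMap.zero_apply]
  have eA : mval (minc (mdec m b) e) a = mval m a := by
    rw [mval_move hb hbn he hen hbe a ha]
    split_ifs <;> subst_vars <;> omega
  have hT1 : Sop n μ K q a b (Sop n μ K q a b (Sop n μ K q b e (sngl n μ K m)))
      = (qint q (mval m b : ℤ) * (qint q (mval m a : ℤ) * qint q ((mval m a : ℤ) - 1)))
        • sngl n μ K (minc (mdec (minc (mdec (minc (mdec m b) e) a) b) a) b) := by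
    rw [Sop_sngl hb he hen hbe, map_smul, map_smul, SS_sngl ha han hb hbn hab, smul_smul, eA]
  have eB : mval (minc (mdec m a) b) b = mval m b + 1 := by
    rw [mval_move ha han hb hbn hab b hb]
    split_ifs <;> subst_vars <;> omega
  have eC : mval (minc (mdec (minc (mdec m a) b) b) e) a = mval (minc (mdec m a) b) a := by
    rw [mval_move hb hbn he hen hbe a ha]
    split_ifs <;> subst_vars <;> omega
  have eD : mval (minc (mdec m a) b) a = mval m a - 1 := by
    rw [mval_move ha han hb hbn hab a ha]
    split_ifs <;> omega
  have hT2 : Sop n μ K q a b (Sop n μ K q b e (Sop n μ K q a b (sngl n μ K m)))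
      = (qint q (mval m a : ℤ) * qint q ((mval m b + 1 : ℕ) : ℤ)
          * qint q ((mval m a - 1 : ℕ) : ℤ))
        • sngl n μ K (minc (mdec (minc (mdec (minc (mdec m a) b) b) e) a) b) := by
    rw [Sop_sngl ha hb hbn hab, map_smul, Sop_sngl hb he hen hbe, map_smul, map_smul,
      Sop_sngl ha hb hbn hab, smul_smul, smul_smul, eB, eC, eD]
  have eE : mval (minc (mdec (minc (mdec m a) b) a) b) b = mval m b + 1 + 1 := by
    rw [mval_move ha han hb hbn hab b hb, mval_move ha han hb hbn hab b hb]
    split_ifs <;> subst_vars <;> omega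
  have hT3 : Sop n μ K q b e (Sop n μ K q a b (Sop n μ K q a b (sngl n μ K m)))
      = (qint q (mval m a : ℤ) * qint q ((mval m a : ℤ) - 1)
          * qint q ((mval m b + 1 + 1 : ℕ) : ℤ))
        • sngl n μ K (minc (mdec (minc (mdec (minc (mdec m a) b) a) b) b) e) := by
    rw [SS_sngl ha han hb hbn hab, map_smul, Sop_sngl hb he hen hbe, smul_smul, eE]
  rw [hT1, hT2, hT3]
  have hv23 : minc (mdec (minc (mdec (minc (mdec m a) b) b) e) a) b
      = minc (mdec (minc (mdec (minc (mdec m a) b) a) b) b) e := by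
    apply eq_of_mval
    intro k hk hkn
    simp only [mval_move ha han hb hbn hab k hk, mval_move hb hbn he hen hbe k hk]
    split_ifs <;> subst_vars <;> omega
  by_cases ha0 : mval m a = 0
  · rw [ha0]
    norm_num [qint_zero]
  by_cases ha1 : mval m a = 1
  · rw [ha1]
    norm_num [qint_zero]
  have hsub : ((mval m a - 1 : ℕ) : ℤ) = (mval m a : ℤ) - 1 := by omega
  by_cases hb0 : mval m b = 0
  · rw [hb0, hv23, hsub]
    norm_num [qint_zero, qint_one hq0 hq1, qint_two hq0 hq1]
    rw [smul_smul, ← neg_smul, ← add_smul]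
    convert zero_smul K _ using 2
    ring
  · have hv12 : minc (mdec (minc (mdec (minc (mdec m b) e) a) b) a) b
        = minc (mdec (minc (mdec (minc (mdec m a) b) b) e) a) b := by
      apply eq_of_mval
      intro k hk hkn
      simp only [mval_move ha han hb hbn hab k hk, mval_move hb hbn he hen hbe k hk]
      split_ifs <;> subst_vars <;> omega
    rw [hv12, hv23, hsub,
      show ((mval m b + 1 : ℕ) : ℤ) = (mval m b : ℤ) + 1 from by push_cast; ring,
      show ((mval m b + 1 + 1 : ℕ) : ℤ) = (mval m b : ℤ) + 1 + 1 from by push_cast; ring,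
      smul_smul, ← sub_smul, ← add_smul]
    convert zero_smul K _ using 2
    have hs := qint_serre hq0 hq1 ((mval m b : ℤ) + 1)
    rw [add_sub_cancel_right] at hs
    linear_combination (qint q (mval m a : ℤ) * qint q ((mval m a : ℤ) - 1)) * hs

end Serre

/-- The operators `E_i`, `F_i`, `K_i` on `V` satisfy the defining relations of
`U_q(sl(n))`; hence `V` carries a structure of `U_q(sl(n))`-module (the
`q`-deformation `V^q_{μω_1}` of the `μ`-th symmetric power of the vector
representation). -/
theorem stmt_4 (n : ℕ) (hn : 2 ≤ n) (K : Type*) [Field K] (q : K) (hq0 : q ≠ 0)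
    (hq1 : q ^ 2 ≠ 1) (μ : ℕ) :
    ∀ i ∈ Finset.Icc 1 (n - 1), ∀ j ∈ Finset.Icc 1 (n - 1),
      (Kop n μ K q i * Kop n μ K q j = Kop n μ K q j * Kop n μ K q i) ∧
      (Kop n μ K q i * Kinvop n μ K q i = 1 ∧ Kinvop n μ K q i * Kop n μ K q i = 1) ∧
      (Kop n μ K q i * Eop n μ K q j * Kinvop n μ K q i = q ^ cart i j • Eop n μ K q j) ∧
      (Kop n μ K q i * Fop n μ K q j * Kinvop n μ K q i = q ^ (-cart i j) • Fop n μ K q j) ∧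
      (Eop n μ K q i * Fop n μ K q j - Fop n μ K q j * Eop n μ K q i =
        if i = j then (q - q⁻¹)⁻¹ • (Kop n μ K q i - Kinvop n μ K q i) else 0) ∧
      (i + 2 ≤ j ∨ j + 2 ≤ i →
        Eop n μ K q i * Eop n μ K q j = Eop n μ K q j * Eop n μ K q i ∧
        Fop n μ K q i * Fop n μ K q j = Fop n μ K q j * Fop n μ K q i) ∧
      (i + 1 = j ∨ j + 1 = i →
        Eop n μ K q i * Eop n μ K q i * Eop n μ K q j -
            (q + q⁻¹) • (Eop n μ K q i * Eop n μ K q j * Eop n μ K q i) +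
            Eop n μ K q j * Eop n μ K q i * Eop n μ K q i = 0 ∧
        Fop n μ K q i * Fop n μ K q i * Fop n μ K q j -
            (q + q⁻¹) • (Fop n μ K q i * Fop n μ K q j * Fop n μ K q i) +
            Fop n μ K q j * Fop n μ K q i * Fop n μ K q i = 0) := by
  intro i hi j hj
  rw [Finset.mem_Icc] at hi hj
  obtain ⟨hi1, hi2⟩ := hi
  obtain ⟨hj1, hj2⟩ := hj
  have hi2' : i + 1 ≤ n := by omega
  have hj2' : j + 1 ≤ n := by omega
  refine ⟨rel_KK i j, ⟨rel_KKinv hq0 i, rel_KinvK hq0 i⟩, ?_, ?_, ?_, ?_, ?_⟩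
  · rw [Eop_eq_Sop, K_conj_S hq0 hi1 (by omega) hj2' hj1 (by omega) (by omega),
      show ((if j = i then 1 else 0) - (if j + 1 = i then 1 else 0)
          - ((if j = i + 1 then 1 else 0) - (if j + 1 = i + 1 then 1 else 0)) : ℤ)
        = cart i j from by unfold cart; split_ifs <;> omega]
  · rw [Fop_eq_Sop, K_conj_S hq0 hi1 hj1 (by omega) (by omega) hj2' (by omega),
      show ((if j + 1 = i then 1 else 0) - (if j = i then 1 else 0)
          - ((if j + 1 = i + 1 then 1 else 0) - (if j = i + 1 then 1 else 0)) : ℤ)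
        = -cart i j from by unfold cart; split_ifs <;> omega]
  · by_cases hij : i = j
    · subst hij
      rw [if_pos rfl, Eop_eq_Sop, Fop_eq_Sop]
      exact rel_EF_diag hq0 hq1 hi1 hi2'
    · rw [if_neg hij, Eop_eq_Sop, Fop_eq_Sop]
      rw [S_comm (by omega) hi2' hi1 (by omega) hj1 (by omega) (by omega) hj2'
        (by omega) (by omega) (by omega) (by omega)]
      exact sub_self (Sop n μ K q j (j + 1) * Sop n μ K q (i + 1) i)
  · intro h
    constructor
    · rw [Eop_eq_Sop, Eop_eq_Sop]
      exact S_comm (by omega) hi2' hi1 (by omega) (by omega) hj2' hj1 (by omega)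
        (by omega) (by omega) (by omega) (by omega)
    · rw [Fop_eq_Sop, Fop_eq_Sop]
      exact S_comm hi1 (by omega) (by omega) hi2' hj1 (by omega) (by omega) hj2'
        (by omega) (by omega) (by omega) (by omega)
  · intro h
    constructor
    · rcases h with h1 | h2
      · subst h1
        rw [Eop_eq_Sop i, Eop_eq_Sop (i + 1)]
        exact S_serre1 hq0 hq1 (by omega) (by omega) (by omega) (by omega) (by omega)
          (by omega) (by omega) (by omega) (by omega)
      · subst h2
        rw [Eop_eq_Sop (j + 1), Eop_eq_Sop j]
        exact S_serre2 hq0 hq1 (by omega) (by omega) (by omega) (by omega) (by omega)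
          (by omega) (by omega) (by omega) (by omega)
    · rcases h with h1 | h2
      · subst h1
        rw [Fop_eq_Sop i, Fop_eq_Sop (i + 1)]
        exact S_serre2 hq0 hq1 (by omega) (by omega) (by omega) (by omega) (by omega)
          (by omega) (by omega) (by omega) (by omega)
      · subst h2
        rw [Fop_eq_Sop (j + 1), Fop_eq_Sop j]
        exact S_serre1 hq0 hq1 (by omega) (by omega) (by omega) (by omega) (by omega)
          (by omega) (by omega) (by omega) (by omega)
end
end

section
/- Let n ≥ 3. The vector s_{2ω_1+ω_{n−2}} = g_{1,n} ⊗ g_{1,n−1} − q^{−1}·g_{1,n−1} ⊗ g_{1,n} in W ⊗ W satisfies Ê_i(s_{2ω_1+ω_{n−2}}) = 0 for every 1 ≤ i ≤ n−1; i.e. it is a highest weight vector of the U_q(sl(n))-module W ⊗ W (of highest weight 2ω_1+ω_{n−2}). -/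
noncomputable section

/-- Index set for the basis `{g_{k,l} : 1 ≤ k, l ≤ n, k ≠ l} ∪ {t_k : 1 ≤ k ≤ n−1}`
of `g_q` (the `q`-analogue of the adjoint representation of `sl(n)`). -/
abbrev WIdx (n : ℕ) := {p : Fin n × Fin n // p.1 ≠ p.2} ⊕ Fin (n - 1)

/-- The free `K`-module `W = g_q` with the above basis. -/
abbrev WMod (n : ℕ) (K : Type*) [Field K] := WIdx n →₀ K

/-- The basis vector `g_{k,l}` (for 1-based indices `1 ≤ k, l ≤ n`, `k ≠ l`;
junk value `0` otherwise). -/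
def gW (n : ℕ) (K : Type*) [Field K] (k l : ℕ) : WMod n K :=
  if h : 1 ≤ k ∧ 1 ≤ l ∧ k ≠ l ∧ k - 1 < n ∧ l - 1 < n then
    Finsupp.single
      (Sum.inl ⟨(⟨k - 1, h.2.2.2.1⟩, ⟨l - 1, h.2.2.2.2⟩), by intro hc; simp at hc; omega⟩) 1
  else 0

/-- The basis vector `t_k` (for 1-based `1 ≤ k ≤ n−1`; junk value `0` otherwise). -/
def tW (n : ℕ) (K : Type*) [Field K] (k : ℕ) : WMod n K :=
  if h : 1 ≤ k ∧ k - 1 < n - 1 then Finsupp.single (Sum.inr ⟨k - 1, h.2⟩) 1 else 0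

/-- The weight `λ_i` of a basis vector of `W`:
`λ_i(g_{k,l}) = δ_{i,k} − δ_{i,l} − δ_{i+1,k} + δ_{i+1,l}`, `λ_i(t_k) = 0`. -/
def lamW (n : ℕ) (i : ℕ) : WIdx n → ℤ
  | Sum.inl p =>
      (if (p.1.1 : ℕ) + 1 = i then 1 else 0) - (if (p.1.2 : ℕ) + 1 = i then 1 else 0) -
        (if (p.1.1 : ℕ) + 1 = i + 1 then 1 else 0) + (if (p.1.2 : ℕ) + 1 = i + 1 then 1 else 0)
  | Sum.inr _ => 0

/-- The action of `ad e_i` on the basis of `W`: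
`g_{a,i} ↦ −g_{a,i+1}` and `g_{i+1,a} ↦ g_{i,a}` for `a ∉ {i, i+1}`,
`g_{i+1,i} ↦ t_i`, `t_i ↦ −[2]_q g_{i,i+1}`, `t_{i±1} ↦ g_{i,i+1}`,
and every other basis vector to `0`. -/
def adeB (n : ℕ) (K : Type*) [Field K] (q : K) (i : ℕ) : WIdx n → WMod n K
  | Sum.inl p =>
      if (p.1.2 : ℕ) + 1 = i ∧ (p.1.1 : ℕ) + 1 ≠ i ∧ (p.1.1 : ℕ) + 1 ≠ i + 1 then
        -gW n K ((p.1.1 : ℕ) + 1) (i + 1)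
      else if (p.1.1 : ℕ) + 1 = i + 1 ∧ (p.1.2 : ℕ) + 1 ≠ i ∧ (p.1.2 : ℕ) + 1 ≠ i + 1 then
        gW n K i ((p.1.2 : ℕ) + 1)
      else if (p.1.1 : ℕ) + 1 = i + 1 ∧ (p.1.2 : ℕ) + 1 = i then tW n K i
      else 0
  | Sum.inr k =>
      if (k : ℕ) + 1 = i then -((q + q⁻¹) • gW n K i (i + 1))
      else if (k : ℕ) + 1 + 1 = i ∨ (k : ℕ) + 1 = i + 1 then gW n K i (i + 1)
      else 0

/-- The operator `ad e_i` on `W`. -/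
def adeW (n : ℕ) (K : Type*) [Field K] (q : K) (i : ℕ) : Module.End K (WMod n K) :=
  Finsupp.lift (WMod n K) K (WIdx n) (adeB n K q i)

/-- The action of `ad f_i` on the basis of `W`:
`g_{a,i+1} ↦ −g_{a,i}` and `g_{i,a} ↦ g_{i+1,a}` for `a ∉ {i, i+1}`,
`g_{i,i+1} ↦ −t_i`, `t_i ↦ [2]_q g_{i+1,i}`, `t_{i±1} ↦ −g_{i+1,i}`,
and every other basis vector to `0`. -/
def adfB (n : ℕ) (K : Type*) [Field K] (q : K) (i : ℕ) : WIdx n → WMod n K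
  | Sum.inl p =>
      if (p.1.2 : ℕ) + 1 = i + 1 ∧ (p.1.1 : ℕ) + 1 ≠ i ∧ (p.1.1 : ℕ) + 1 ≠ i + 1 then
        -gW n K ((p.1.1 : ℕ) + 1) i
      else if (p.1.1 : ℕ) + 1 = i ∧ (p.1.2 : ℕ) + 1 ≠ i ∧ (p.1.2 : ℕ) + 1 ≠ i + 1 then
        gW n K (i + 1) ((p.1.2 : ℕ) + 1)
      else if (p.1.1 : ℕ) + 1 = i ∧ (p.1.2 : ℕ) + 1 = i + 1 then -tW n K i
      else 0
  | Sum.inr k =>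
      if (k : ℕ) + 1 = i then (q + q⁻¹) • gW n K (i + 1) i
      else if (k : ℕ) + 1 + 1 = i ∨ (k : ℕ) + 1 = i + 1 then -gW n K (i + 1) i
      else 0

/-- The operator `ad f_i` on `W`. -/
def adfW (n : ℕ) (K : Type*) [Field K] (q : K) (i : ℕ) : Module.End K (WMod n K) :=
  Finsupp.lift (WMod n K) K (WIdx n) (adfB n K q i)

/-- The operator `ad h_i` on `W`, multiplying each basis vector `w` by `λ_i(w)`. -/
def adhW (n : ℕ) (K : Type*) [Field K] (i : ℕ) : Module.End K (WMod n K) :=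
  Finsupp.lift (WMod n K) K (WIdx n) fun w => ((lamW n i w : ℤ) : K) • Finsupp.single w 1

open scoped TensorProduct

/-- Shortcut instance (the canonical zero of the tensor product); this avoids a
typeclass-search explosion for `Zero` on tensor products of `Finsupp`s. -/
noncomputable instance instZeroTPFinsupp (K : Type*) [Field K] (X : Type*) :
    Zero (TensorProduct K (X →₀ K) (X →₀ K)) := AddMonoid.toZero

open scoped TensorProduct

/-- The action `Ê_i` of the Chevalley generator `e_i` of `U_q(sl(n))` on `W ⊗ W`
via the coproduct `Δe_i = e_i ⊗ 1 + q^{−h_i} ⊗ e_i`: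
`Ê_i(x ⊗ y) = (ad e_i x) ⊗ y + q^{−λ_i(x)}·x ⊗ (ad e_i y)` on basis vectors. -/
def Ehat (n : ℕ) (K : Type*) [Field K] (q : K) (i : ℕ) :
    Module.End K (WMod n K ⊗[K] WMod n K) :=
  TensorProduct.map (adeW n K q i) LinearMap.id +
    TensorProduct.map
      (Finsupp.lift (WMod n K) K (WIdx n) fun w => q ^ (-lamW n i w) • Finsupp.single w 1)
      (adeW n K q i)

/-- The action `F̂_i` of `f_i` on `W ⊗ W` via `Δf_i = 1 ⊗ f_i + f_i ⊗ q^{h_i}`: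
`F̂_i(x ⊗ y) = x ⊗ (ad f_i y) + q^{λ_i(y)}·(ad f_i x) ⊗ y` on basis vectors. -/
def Fhat (n : ℕ) (K : Type*) [Field K] (q : K) (i : ℕ) :
    Module.End K (WMod n K ⊗[K] WMod n K) :=
  TensorProduct.map LinearMap.id (adfW n K q i) +
    TensorProduct.map (adfW n K q i)
      (Finsupp.lift (WMod n K) K (WIdx n) fun w => q ^ lamW n i w • Finsupp.single w 1)

/-- The action `Ĥ_i` of `h_i` on `W ⊗ W` via `Δh_i = h_i ⊗ 1 + 1 ⊗ h_i`. -/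
def Hhat (n : ℕ) (K : Type*) [Field K] (i : ℕ) :
    Module.End K (WMod n K ⊗[K] WMod n K) :=
  TensorProduct.map (adhW n K i) LinearMap.id + TensorProduct.map LinearMap.id (adhW n K i)

lemma lift_single_one (n : ℕ) (K : Type*) [Field K] (f : WIdx n → WMod n K) (w : WIdx n) :
    Finsupp.lift (WMod n K) K (WIdx n) f (Finsupp.single w 1) = f w := by
  simp

/-- The vector `s_{2ω_1+ω_{n−2}} = g_{1,n} ⊗ g_{1,n−1} − q^{−1}·g_{1,n−1} ⊗ g_{1,n}`
is a highest weight vector of the `U_q(sl(n))`-module `W ⊗ W`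
(of highest weight `2ω_1 + ω_{n−2}`): it is killed by every `Ê_i`. -/
theorem stmt_6 (n : ℕ) (hn : 3 ≤ n) (K : Type*) [Field K] (q : K) (hq0 : q ≠ 0)
    (hq1 : q ^ 2 ≠ 1) :
    ∀ i ∈ Finset.Icc 1 (n - 1),
      Ehat n K q i
        (gW n K 1 n ⊗ₜ[K] gW n K 1 (n - 1) - q⁻¹ • (gW n K 1 (n - 1) ⊗ₜ[K] gW n K 1 n)) = 0 := by
  intro i hi
  simp only [Finset.mem_Icc] at hi
  have hA : 1 ≤ (1:ℕ) ∧ 1 ≤ n ∧ (1:ℕ) ≠ n ∧ 1-1 < n ∧ n-1 < n := by omega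
  have hB : 1 ≤ (1:ℕ) ∧ 1 ≤ n-1 ∧ (1:ℕ) ≠ n-1 ∧ 1-1 < n ∧ (n-1)-1 < n := by omega
  have hgA : gW n K 1 n = Finsupp.single (Sum.inl ⟨(⟨1-1, hA.2.2.2.1⟩, ⟨n-1, hA.2.2.2.2⟩), by intro hc; simp at hc; omega⟩) 1 := by
    rw [gW, dif_pos hA]
  have hgB : gW n K 1 (n-1) = Finsupp.single (Sum.inl ⟨(⟨1-1, hB.2.2.2.1⟩, ⟨(n-1)-1, hB.2.2.2.2⟩), by intro hc; simp at hc; omega⟩) 1 := by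
    rw [gW, dif_pos hB]
  have hz1 : adeW n K q i (gW n K 1 n) = 0 := by
    rw [hgA, adeW, lift_single_one, adeB]
    rw [if_neg (by simp only [Fin.val_mk]; omega), if_neg (by simp only [Fin.val_mk]; omega), if_neg (by simp only [Fin.val_mk]; omega)]
  by_cases hcase : i = n - 1
  · subst hcase
    have hz2 : adeW n K q (n-1) (gW n K 1 (n-1)) = -gW n K 1 n := by
      rw [hgB, adeW, lift_single_one, adeB]
      rw [if_pos (by simp only [Fin.val_mk]; omega)]
      have h1 : (n - 1 : ℕ) + 1 = n := by omega
      simp only [Fin.val_mk, h1]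
    have hL : (Finsupp.lift (WMod n K) K (WIdx n)
        fun w => q ^ (-lamW n (n-1) w) • Finsupp.single w 1) (gW n K 1 n)
        = q⁻¹ • gW n K 1 n := by
      conv_lhs => rw [hgA, lift_single_one]
      rw [lamW]
      rw [if_neg (by simp only [Fin.val_mk]; omega), if_neg (by simp only [Fin.val_mk]; omega), if_neg (by simp only [Fin.val_mk]; omega)]
      norm_num [hgA]
    simp only [Ehat, LinearMap.add_apply, map_sub, map_smul, TensorProduct.map_tmul,
      LinearMap.id_coe, id_eq, hz1, hz2, hL, TensorProduct.zero_tmul, TensorProduct.tmul_zero]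
    simp only [TensorProduct.tmul_neg, TensorProduct.neg_tmul, ← TensorProduct.smul_tmul',
      smul_neg, add_zero, sub_zero, zero_sub, zero_add, smul_zero, neg_neg, smul_smul]
    module
  · have hz2 : adeW n K q i (gW n K 1 (n-1)) = 0 := by
      rw [hgB, adeW, lift_single_one, adeB]
      rw [if_neg (by simp only [Fin.val_mk]; omega), if_neg (by simp only [Fin.val_mk]; omega), if_neg (by simp only [Fin.val_mk]; omega)]
    simp only [Ehat, LinearMap.add_apply, map_sub, map_smul, TensorProduct.map_tmul,
      LinearMap.id_coe, id_eq, hz1, hz2, TensorProduct.zero_tmul, TensorProduct.tmul_zero]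
    simp
end
end

section
/- Let n ≥ 3. The vector s_{ω_2+2ω_{n−1}} = g_{1,n} ⊗ g_{2,n} − q^{−1}·g_{2,n} ⊗ g_{1,n} in W ⊗ W satisfies Ê_i(s_{ω_2+2ω_{n−1}}) = 0 for every 1 ≤ i ≤ n−1; i.e. it is a highest weight vector of the U_q(sl(n))-module W ⊗ W (of highest weight ω_2+2ω_{n−1}). -/
noncomputable section

open scoped TensorProduct

open scoped TensorProduct

lemma liftW {n : ℕ} {K : Type*} [Field K] (f : WIdx n → WMod n K) (w : WIdx n) :
    Finsupp.lift (WMod n K) K (WIdx n) f (Finsupp.single w 1) = f w := by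
  simp

/-- The vector `s_{ω_2+2ω_{n−1}} = g_{1,n} ⊗ g_{2,n} − q^{−1}·g_{2,n} ⊗ g_{1,n}`
is a highest weight vector of the `U_q(sl(n))`-module `W ⊗ W`
(of highest weight `ω_2 + 2ω_{n−1}`): it is killed by every `Ê_i`. -/
theorem stmt_7 (n : ℕ) (hn : 3 ≤ n) (K : Type*) [Field K] (q : K) (hq0 : q ≠ 0)
    (hq1 : q ^ 2 ≠ 1) :
    ∀ i ∈ Finset.Icc 1 (n - 1),
      Ehat n K q i
        (gW n K 1 n ⊗ₜ[K] gW n K 2 n - q⁻¹ • (gW n K 2 n ⊗ₜ[K] gW n K 1 n)) = 0 := by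
  intro i hi
  obtain ⟨hi1, hi2⟩ := Finset.mem_Icc.mp hi
  have hn1 : n - 1 + 1 = n := by omega
  have hw1ne : ((⟨0, by omega⟩ : Fin n), (⟨n - 1, by omega⟩ : Fin n)).1 ≠ ((⟨0, by omega⟩ : Fin n), (⟨n - 1, by omega⟩ : Fin n)).2 := by
    simp [Fin.ext_iff]; omega
  have hw2ne : ((⟨1, by omega⟩ : Fin n), (⟨n - 1, by omega⟩ : Fin n)).1 ≠ ((⟨1, by omega⟩ : Fin n), (⟨n - 1, by omega⟩ : Fin n)).2 := by
    simp [Fin.ext_iff]; omega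
  set w1 : WIdx n := Sum.inl ⟨(⟨0, by omega⟩, ⟨n - 1, by omega⟩), hw1ne⟩ with hw1
  set w2 : WIdx n := Sum.inl ⟨(⟨1, by omega⟩, ⟨n - 1, by omega⟩), hw2ne⟩ with hw2
  have eg1 : gW n K 1 n = Finsupp.single w1 1 := by
    rw [gW, dif_pos (by omega)]
  have eg2 : gW n K 2 n = Finsupp.single w2 1 := by
    rw [gW, dif_pos (by omega)]
  have a1 : (adeW n K q i) (Finsupp.single w1 1) = 0 := by
    rw [adeW, liftW]
    show adeB n K q i (Sum.inl _) = 0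
    rw [adeB]
    simp only [Fin.val_mk, hn1]
    rw [if_neg (by omega), if_neg (by omega), if_neg (by omega)]
  have a2 : (adeW n K q i) (Finsupp.single w2 1) =
      if i = 1 then Finsupp.single w1 1 else 0 := by
    rw [adeW, liftW]
    show adeB n K q i (Sum.inl _) = _
    rw [adeB]
    simp only [Fin.val_mk, hn1]
    by_cases h1 : i = 1
    · subst h1
      rw [if_neg (by omega), if_pos ⟨by omega, by omega, by omega⟩, if_pos rfl]
      exact eg1
    · rw [if_neg (by omega), if_neg (by omega), if_neg (by omega), if_neg h1]
  have l1 : (Finsupp.lift (WMod n K) K (WIdx n)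
      fun w => q ^ (-lamW n i w) • Finsupp.single w 1) (Finsupp.single w1 1)
      = q ^ (-lamW n i w1) • Finsupp.single w1 1 := liftW _ _
  have l2 : (Finsupp.lift (WMod n K) K (WIdx n)
      fun w => q ^ (-lamW n i w) • Finsupp.single w 1) (Finsupp.single w2 1)
      = q ^ (-lamW n i w2) • Finsupp.single w2 1 := liftW _ _
  rw [eg1, eg2, Ehat]
  simp only [LinearMap.add_apply, map_sub, map_smul, TensorProduct.map_tmul,
    LinearMap.id_apply, a1, a2, l1, l2, TensorProduct.tmul_zero, TensorProduct.zero_tmul]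
  by_cases h1 : i = 1
  · subst h1
    have hlam : lamW n 1 w1 = 1 := by
      rw [hw1, lamW]
      simp only [Fin.val_mk]
      split_ifs <;> omega
    rw [if_pos rfl, hlam]
    simp only [zpow_neg, zpow_one, smul_smul]
    rw [zero_add, add_zero, TensorProduct.smul_tmul', sub_self]
  · rw [if_neg h1]
    simp
end
end

section
/- Let n ≥ 4. The vector s_{ω_2+ω_{n−2}} = q·g_{1,n} ⊗ g_{2,n−1} + q^{−1}·g_{2,n−1} ⊗ g_{1,n} − g_{1,n−1} ⊗ g_{2,n} − g_{2,n} ⊗ g_{1,n−1} in W ⊗ W satisfies Ê_i(s_{ω_2+ω_{n−2}}) = 0 for every 1 ≤ i ≤ n−1; i.e. it is a highest weight vector of the U_q(sl(n))-module W ⊗ W (of highest weight ω_2+ω_{n−2}). -/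
noncomputable section

open scoped TensorProduct

open scoped TensorProduct

section helpers
variable {n : ℕ} {K : Type*} [Field K] {q : K}

lemma adeW_gW (i k l : ℕ) (h : 1 ≤ k ∧ 1 ≤ l ∧ k ≠ l ∧ k - 1 < n ∧ l - 1 < n) :
    adeW n K q i (gW n K k l) =
      if l = i ∧ k ≠ i ∧ k ≠ i + 1 then -gW n K k (i + 1)
      else if k = i + 1 ∧ l ≠ i ∧ l ≠ i + 1 then gW n K i l
      else if k = i + 1 ∧ l = i then tW n K i
      else 0 := by
  have h1 : k - 1 + 1 = k := by omega
  have h2 : l - 1 + 1 = l := by omega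
  rw [gW, dif_pos h, adeW]
  rw [Finsupp.lift_apply, Finsupp.sum_single_index (by simp), one_smul]
  simp only [adeB, h1, h2]

lemma M_gW (i k l : ℕ) (h : 1 ≤ k ∧ 1 ≤ l ∧ k ≠ l ∧ k - 1 < n ∧ l - 1 < n) :
    (Finsupp.lift (WMod n K) K (WIdx n) fun w => q ^ (-lamW n i w) • Finsupp.single w 1)
        (gW n K k l) =
      q ^ (-(((if k = i then 1 else 0) - (if l = i then 1 else 0) -
          (if k = i + 1 then 1 else 0) + (if l = i + 1 then 1 else 0)) : ℤ)) • gW n K k l := by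
  have h1 : k - 1 + 1 = k := by omega
  have h2 : l - 1 + 1 = l := by omega
  rw [gW, dif_pos h]
  rw [Finsupp.lift_apply, Finsupp.sum_single_index (by simp), one_smul]
  simp only [lamW, h1, h2]

end helpers
set_option maxHeartbeats 1000000

/-- The vector
`s_{ω_2+ω_{n−2}} = q·g_{1,n} ⊗ g_{2,n−1} + q^{−1}·g_{2,n−1} ⊗ g_{1,n}
  − g_{1,n−1} ⊗ g_{2,n} − g_{2,n} ⊗ g_{1,n−1}`
is a highest weight vector of the `U_q(sl(n))`-module `W ⊗ W`
(of highest weight `ω_2 + ω_{n−2}`): it is killed by every `Ê_i`. -/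
theorem stmt_8 (n : ℕ) (hn : 4 ≤ n) (K : Type*) [Field K] (q : K) (hq0 : q ≠ 0)
    (hq1 : q ^ 2 ≠ 1) :
    ∀ i ∈ Finset.Icc 1 (n - 1),
      Ehat n K q i
        (q • (gW n K 1 n ⊗ₜ[K] gW n K 2 (n - 1)) + q⁻¹ • (gW n K 2 (n - 1) ⊗ₜ[K] gW n K 1 n) -
          gW n K 1 (n - 1) ⊗ₜ[K] gW n K 2 n - gW n K 2 n ⊗ₜ[K] gW n K 1 (n - 1)) = 0 := by
  intro i hi
  simp only [Finset.mem_Icc] at hi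
  obtain ⟨hi1, hi2⟩ := hi
  have hA : 1 ≤ 1 ∧ 1 ≤ n ∧ 1 ≠ n ∧ 1 - 1 < n ∧ n - 1 < n := by omega
  have hB : 1 ≤ 2 ∧ 1 ≤ n - 1 ∧ 2 ≠ n - 1 ∧ 2 - 1 < n ∧ n - 1 - 1 < n := by omega
  have hC : 1 ≤ 1 ∧ 1 ≤ n - 1 ∧ 1 ≠ n - 1 ∧ 1 - 1 < n ∧ n - 1 - 1 < n := by omega
  have hD : 1 ≤ 2 ∧ 1 ≤ n ∧ 2 ≠ n ∧ 2 - 1 < n ∧ n - 1 < n := by omega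
  have hn1 : n - 1 + 1 = n := by omega
  have eA : adeW n K q i (gW n K 1 n) = 0 := by
    rw [adeW_gW i 1 n hA]
    split_ifs <;> first | rfl | (exfalso; omega)
  simp only [Ehat, LinearMap.add_apply, map_add, map_sub, map_smul,
    TensorProduct.map_tmul, LinearMap.id_coe, id_eq, eA]
  rcases eq_or_ne i 1 with h1 | h1
  · subst h1
    have eB : adeW n K q 1 (gW n K 2 (n - 1)) = gW n K 1 (n - 1) := by
      rw [adeW_gW 1 2 (n - 1) hB]
      split_ifs <;> first | rfl | (exfalso; omega)
    have eC : adeW n K q 1 (gW n K 1 (n - 1)) = 0 := by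
      rw [adeW_gW 1 1 (n - 1) hC]
      split_ifs <;> first | rfl | (exfalso; omega)
    have eD : adeW n K q 1 (gW n K 2 n) = gW n K 1 n := by
      rw [adeW_gW 1 2 n hD]
      split_ifs <;> first | rfl | (exfalso; omega)
    have mA : (Finsupp.lift (WMod n K) K (WIdx n)
        fun w => q ^ (-lamW n 1 w) • Finsupp.single w 1) (gW n K 1 n) =
        q⁻¹ • gW n K 1 n := by
      rw [M_gW 1 1 n hA]
      rw [if_pos rfl, if_neg (by omega), if_neg (by omega), if_neg (by omega)]
      norm_num
    have mC : (Finsupp.lift (WMod n K) K (WIdx n)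
        fun w => q ^ (-lamW n 1 w) • Finsupp.single w 1) (gW n K 1 (n - 1)) =
        q⁻¹ • gW n K 1 (n - 1) := by
      rw [M_gW 1 1 (n - 1) hC]
      rw [if_pos rfl, if_neg (by omega), if_neg (by omega), if_neg (by omega)]
      norm_num
    rw [eB, eC, eD, mA, mC]
    simp only [TensorProduct.zero_tmul, TensorProduct.tmul_zero, smul_zero, zero_add, add_zero,
      sub_zero, zero_sub, TensorProduct.tmul_neg, TensorProduct.neg_tmul,
      ← TensorProduct.smul_tmul', TensorProduct.tmul_smul]
    match_scalars <;> field_simp <;> ring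
  · rcases eq_or_ne i (n - 1) with h2 | h2
    · subst h2
      have eB : adeW n K q (n - 1) (gW n K 2 (n - 1)) = -gW n K 2 n := by
        rw [adeW_gW (n - 1) 2 (n - 1) hB]
        split_ifs <;> first | (rw [hn1]) | rfl | (exfalso; omega)
      have eC : adeW n K q (n - 1) (gW n K 1 (n - 1)) = -gW n K 1 n := by
        rw [adeW_gW (n - 1) 1 (n - 1) hC]
        split_ifs <;> first | (rw [hn1]) | rfl | (exfalso; omega)
      have eD : adeW n K q (n - 1) (gW n K 2 n) = 0 := by
        rw [adeW_gW (n - 1) 2 n hD]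
        split_ifs <;> first | rfl | (exfalso; omega)
      have mA : (Finsupp.lift (WMod n K) K (WIdx n)
          fun w => q ^ (-lamW n (n - 1) w) • Finsupp.single w 1) (gW n K 1 n) =
          q⁻¹ • gW n K 1 n := by
        rw [M_gW (n - 1) 1 n hA]
        rw [if_neg (by omega), if_neg (by omega), if_neg (by omega), if_pos (by omega)]
        norm_num
      have mD : (Finsupp.lift (WMod n K) K (WIdx n)
          fun w => q ^ (-lamW n (n - 1) w) • Finsupp.single w 1) (gW n K 2 n) =
          q⁻¹ • gW n K 2 n := by
        rw [M_gW (n - 1) 2 n hD]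
        rw [if_neg (by omega), if_neg (by omega), if_neg (by omega), if_pos (by omega)]
        norm_num
      rw [eB, eC, eD, mA, mD]
      simp only [TensorProduct.zero_tmul, TensorProduct.tmul_zero, smul_zero, zero_add, add_zero,
        sub_zero, zero_sub, TensorProduct.tmul_neg, TensorProduct.neg_tmul,
        ← TensorProduct.smul_tmul', TensorProduct.tmul_smul]
      match_scalars <;> field_simp <;> ring
    · have eB : adeW n K q i (gW n K 2 (n - 1)) = 0 := by
        rw [adeW_gW i 2 (n - 1) hB]
        split_ifs <;> first | rfl | (exfalso; omega)
      have eC : adeW n K q i (gW n K 1 (n - 1)) = 0 := by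
        rw [adeW_gW i 1 (n - 1) hC]
        split_ifs <;> first | rfl | (exfalso; omega)
      have eD : adeW n K q i (gW n K 2 n) = 0 := by
        rw [adeW_gW i 2 n hD]
        split_ifs <;> first | rfl | (exfalso; omega)
      rw [eB, eC, eD]
      simp only [TensorProduct.zero_tmul, TensorProduct.tmul_zero, smul_zero, zero_add,
        add_zero, sub_zero, zero_sub, neg_zero, sub_self]
end
end
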